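/- Let M be a positive semidefinite 3×3 Hermitian matrix on the third factor ℂ³ such that ⟨φ_i, (I⊗I⊗M)φ_j⟩ = 0 for all i≠j, where φ₁,…,φ₈ are the eight product vectors of the irreducible UPB in Eq. (10) in ℂ²⊗ℂ²⊗ℂ³. Then M is a scalar multiple of the 3×3 identity. -/

import Mathlib

open scoped ComplexOrder

noncomputable section

def e {n : ℕ} (i : Fin n) : EuclideanSpace ℂ (Fin n) := EuclideanSpace.single i 1

def tp {m n : ℕ} (a : EuclideanSpace ℂ (Fin m)) (b : EuclideanSpace ℂ (Fin n)) :
    EuclideanSpace ℂ (Fin m × Fin n) := WithLp.toLp 2 (fun p : Fin m × Fin n => a p.1 * b p.2)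

def tp3 {l m n : ℕ} (a : EuclideanSpace ℂ (Fin l)) (b : EuclideanSpace ℂ (Fin m))
    (c : EuclideanSpace ℂ (Fin n)) : EuclideanSpace ℂ (Fin l × Fin m × Fin n) :=
  WithLp.toLp 2 (fun p : Fin l × Fin m × Fin n => a p.1 * b p.2.1 * c p.2.2)

def G : Fin 8 → EuclideanSpace ℂ (Fin 2 × Fin 2 × Fin 3) :=
  ![tp3 (e 0) (e 1) (e 0 - e 1), tp3 (e 1) (e 0 - e 1) (e 0 + e 2),
    tp3 (e 1) (e 0 - e 1) (e 0 - e 2), tp3 (e 0 - e 1) (e 0) (e 1),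
    tp3 (e 0) (e 0 + e 1) (e 2), tp3 (e 0) (e 0 - e 1) (e 2),
    tp3 (e 1) (e 0 + e 1) (e 2), tp3 (e 0 + e 1) (e 0 + e 1) (e 0 + e 1)]

def actC (M : Matrix (Fin 3) (Fin 3) ℂ) (v : EuclideanSpace ℂ (Fin 2 × Fin 2 × Fin 3)) :
    EuclideanSpace ℂ (Fin 2 × Fin 2 × Fin 3) := WithLp.toLp 2 (fun p : Fin 2 × Fin 2 × Fin 3 => ∑ k, M p.2.2 k * v (p.1, p.2.1, k))

lemma key (M : Matrix (Fin 3) (Fin 3) ℂ) (a a' b b' : EuclideanSpace ℂ (Fin 2))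
    (c c' : EuclideanSpace ℂ (Fin 3)) :
    inner ℂ (tp3 a b c) (actC M (tp3 a' b' c')) =
      ((∑ i, (starRingEnd ℂ) (a i) * a' i) * (∑ j, (starRingEnd ℂ) (b j) * b' j)) *
        ∑ j, ∑ k, (starRingEnd ℂ) (c j) * M j k * c' k := by
  simp only [PiLp.inner_apply, RCLike.inner_apply, Fintype.sum_prod_type, actC, tp3, PiLp.toLp_apply,
    Fin.sum_univ_two, Fin.sum_univ_three, map_mul]
  ring

theorem charlie_trivial (M : Matrix (Fin 3) (Fin 3) ℂ) (hM : M.PosSemidef)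
    (horth : ∀ i j : Fin 8, i ≠ j → inner ℂ (G i) (actC M (G j)) = (0 : ℂ)) :
    ∃ c : ℂ, M = c • (1 : Matrix (Fin 3) (Fin 3) ℂ) := by
  have herm := hM.1
  have hconj : ∀ i j : Fin 3, (starRingEnd ℂ) (M i j) = M j i := by
    intro i j
    have := congrFun (congrFun herm j) i
    simpa [Matrix.conjTranspose_apply] using this
  -- extract constraints
  have h24 := horth 1 3 (by decide)
  have h34 := horth 2 3 (by decide)
  have h45 := horth 3 4 (by decide)
  have h58 := horth 4 7 (by decide)
  have h15 := horth 0 4 (by decide)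
  have h23 := horth 1 2 (by decide)
  have h18 := horth 0 7 (by decide)
  rw [show G 1 = tp3 (e 1) (e 0 - e 1) (e 0 + e 2) from rfl,
      show G 3 = tp3 (e 0 - e 1) (e 0) (e 1) from rfl, key] at h24
  rw [show G 2 = tp3 (e 1) (e 0 - e 1) (e 0 - e 2) from rfl,
      show G 3 = tp3 (e 0 - e 1) (e 0) (e 1) from rfl, key] at h34
  rw [show G 3 = tp3 (e 0 - e 1) (e 0) (e 1) from rfl,
      show G 4 = tp3 (e 0) (e 0 + e 1) (e 2) from rfl, key] at h45
  rw [show G 4 = tp3 (e 0) (e 0 + e 1) (e 2) from rfl,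
      show G 7 = tp3 (e 0 + e 1) (e 0 + e 1) (e 0 + e 1) from rfl, key] at h58
  rw [show G 0 = tp3 (e 0) (e 1) (e 0 - e 1) from rfl,
      show G 4 = tp3 (e 0) (e 0 + e 1) (e 2) from rfl, key] at h15
  rw [show G 1 = tp3 (e 1) (e 0 - e 1) (e 0 + e 2) from rfl,
      show G 2 = tp3 (e 1) (e 0 - e 1) (e 0 - e 2) from rfl, key] at h23
  rw [show G 0 = tp3 (e 0) (e 1) (e 0 - e 1) from rfl,
      show G 7 = tp3 (e 0 + e 1) (e 0 + e 1) (e 0 + e 1) from rfl, key] at h18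
  simp only [e, Fin.sum_univ_two, Fin.sum_univ_three, PiLp.sub_apply, PiLp.add_apply,
    EuclideanSpace.single_apply, if_true, if_false, map_one, map_zero, map_sub, map_add,
    Fin.reduceEq] at h24 h34 h45 h58 h15 h23 h18
  norm_num at h24 h34 h45 h58 h15 h23 h18
  -- h24 : M 0 1 + M 2 1 = 0 (up to sign); h34 : M 0 1 - M 2 1 = 0, etc.
  refine ⟨M 0 0, ?_⟩
  ext i j
  have e01 : M 0 1 = 0 := by linear_combination (-1/2 : ℂ) * h24 - (1/2 : ℂ) * h34
  have e21 : M 2 1 = 0 := by linear_combination (-1/2 : ℂ) * h24 + (1/2 : ℂ) * h34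
  have e12 : M 1 2 = 0 := by linear_combination h45
  have e20 : M 2 0 = 0 := by linear_combination h58 - e21
  have e02 : M 0 2 = 0 := by linear_combination h15 + e12
  have e10 : M 1 0 = 0 := by rw [← hconj 0 1, e01, map_zero]
  have e22 : M 2 2 = M 0 0 := by linear_combination -h23 - e02 + e20
  have e11 : M 1 1 = M 0 0 := by linear_combination -h18 + e01 - e10
  fin_cases i <;> fin_cases j <;>
    simp [Matrix.smul_apply, Matrix.one_apply, e01, e21, e12, e20, e02, e10, e22, e11]
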